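/- Fix a real E-by-V matrix d, a diagonal V-by-V matrix ★₀, a diagonal E-by-E matrix ★₁, and an edge e ∈ E. For t ∈ ℝ let ★₁(t) = ★₁ + t Eₑₑ, where Eₑₑ is the diagonal matrix with a single 1 in entry (e, e). Suppose x(t) ∈ ℝ^V and λ(t) ∈ ℝ are differentiable at 0 and satisfy dᵀ★₁(t)d x(t) = λ(t) ★₀ x(t) and x(t)ᵀ★₀x(t) = 1 for all t near 0. Then λ'(0) = (yₑ)², where y = d x(0). -/

import Mathlib

/-!
Hellmann–Feynman argument. Along the eigencurve, the normalization `xᵀ★₀x = 1` turns the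
eigenvalue into the Rayleigh quotient `λ(t) = x(t)ᵀ A(t) x(t)` with `A(t) = dᵀ★₁(t)d`.
Differentiating at `0`, the two terms in which `x` is differentiated combine, by the symmetry of
`A(0)` and `★₀` and the eigen equation, into `λ(0)` times the derivative of `xᵀ★₀x`, which is
zero. What remains is `x(0)ᵀ A'(0) x(0) = x(0)ᵀ dᵀ Eₑₑ d x(0) = (d x(0))ₑ²`.
-/

open Matrix Filter Topology

section Derivatives

variable {𝕜 : Type*} [NontriviallyNormedField 𝕜] {m n : Type*} [Fintype n]
  {u v x : 𝕜 → n → 𝕜} {u' v' x' : n → 𝕜} {t : 𝕜}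

theorem HasDerivAt.dotProduct (hu : HasDerivAt u u' t) (hv : HasDerivAt v v' t) :
    HasDerivAt (fun s => u s ⬝ᵥ v s) (u' ⬝ᵥ v t + u t ⬝ᵥ v') t := by
  simp only [_root_.dotProduct, ← Finset.sum_add_distrib]
  exact HasDerivAt.fun_sum fun i _ => (hasDerivAt_pi.mp hu i).mul (hasDerivAt_pi.mp hv i)

theorem HasDerivAt.const_mulVec (A : Matrix m n 𝕜) (hx : HasDerivAt x x' t) :
    HasDerivAt (fun s => A *ᵥ x s) (A *ᵥ x') t := by
  refine hasDerivAt_pi.mpr fun i => ?_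
  simp only [mulVec, _root_.dotProduct]
  exact HasDerivAt.fun_sum fun j _ => (hasDerivAt_pi.mp hx j).const_mul _

end Derivatives

namespace Matrix

variable {R : Type*} [CommSemiring R] {m n : Type*}

theorem IsSymm.dotProduct_mulVec_comm [Fintype n] {A : Matrix n n R} (hA : A.IsSymm)
    (u v : n → R) :
    u ⬝ᵥ (A *ᵥ v) = v ⬝ᵥ (A *ᵥ u) := by
  rw [← dotProduct_transpose_mulVec, hA.eq]

theorem isSymm_transpose_mul_mul [Fintype m] (d : Matrix m n R) {D : Matrix m m R}
    (hD : D.IsSymm) :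
    (dᵀ * D * d).IsSymm := by
  rw [IsSymm, transpose_mul, transpose_mul, hD.eq, transpose_transpose, Matrix.mul_assoc]

theorem dotProduct_transpose_mul_mul_mulVec [Fintype n] [Fintype m] (d : Matrix m n R)
    (D : Matrix m m R) (x : n → R) :
    x ⬝ᵥ ((dᵀ * D * d) *ᵥ x) = (d *ᵥ x) ⬝ᵥ (D *ᵥ (d *ᵥ x)) := by
  rw [← mulVec_mulVec, ← mulVec_mulVec, dotProduct_transpose_mulVec, dotProduct_comm]

theorem dotProduct_single_one_mulVec [Fintype n] [DecidableEq n] (i : n) (y : n → R) :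
    y ⬝ᵥ (single i i 1 *ᵥ y) = y i ^ 2 := by
  rw [single_mulVec_eq, one_mul, dotProduct_smul, dotProduct_single_one, smul_eq_mul, sq]

theorem eq_dotProduct_mulVec_of_mulVec_eq_smul [Fintype n] {A M : Matrix n n R} {x : n → R}
    {μ : R}
    (heig : A *ᵥ x = μ • (M *ᵥ x)) (hnorm : x ⬝ᵥ (M *ᵥ x) = 1) :
    μ = x ⬝ᵥ (A *ᵥ x) := by
  rw [heig, dotProduct_smul, hnorm, smul_eq_mul, mul_one]

end Matrix

section HellmannFeynman

variable {𝕜 : Type*} [NontriviallyNormedField 𝕜] {n : Type*} [Fintype n]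

theorem eigenvalue_deriv_eq_dotProduct_mulVec {B C M : Matrix n n 𝕜} (hB : B.IsSymm)
    (hM : M.IsSymm) {x : 𝕜 → n → 𝕜} {lam : 𝕜 → 𝕜} {x' : n → 𝕜} {lam' : 𝕜}
    (hx : HasDerivAt x x' 0) (hlam : HasDerivAt lam lam' 0)
    (heig : ∀ᶠ t in 𝓝 0, (B + t • C) *ᵥ x t = lam t • (M *ᵥ x t))
    (hnorm : ∀ᶠ t in 𝓝 0, x t ⬝ᵥ (M *ᵥ x t) = 1) :
    lam' = x 0 ⬝ᵥ (C *ᵥ x 0) := by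
  have hrayleigh : (fun t => x t ⬝ᵥ (B *ᵥ x t) + t * x t ⬝ᵥ (C *ᵥ x t)) =ᶠ[𝓝 0] lam := by
    filter_upwards [heig, hnorm] with t ht hn
    rw [eq_dotProduct_mulVec_of_mulVec_eq_smul ht hn, add_mulVec, dotProduct_add, smul_mulVec,
      dotProduct_smul, smul_eq_mul]
  have hquad : ∀ A : Matrix n n 𝕜, HasDerivAt (fun t => x t ⬝ᵥ (A *ᵥ x t))
      (x' ⬝ᵥ (A *ᵥ x 0) + x 0 ⬝ᵥ (A *ᵥ x')) 0 := fun A => hx.dotProduct (hx.const_mulVec A)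
  have hlam_eq : lam' = x' ⬝ᵥ (B *ᵥ x 0) + x 0 ⬝ᵥ (B *ᵥ x') + x 0 ⬝ᵥ (C *ᵥ x 0) := by
    have := ((hquad B).add ((hasDerivAt_id 0).mul (hquad C))).congr_of_eventuallyEq
      hrayleigh.symm
    simpa using hlam.unique this
  have hnorm_deriv : x' ⬝ᵥ (M *ᵥ x 0) + x 0 ⬝ᵥ (M *ᵥ x') = 0 :=
    (hquad M).unique ((hasDerivAt_const 0 1).congr_of_eventuallyEq hnorm)
  have heig0 : B *ᵥ x 0 = lam 0 • (M *ᵥ x 0) := by simpa using heig.self_of_nhds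
  have hvanish : x' ⬝ᵥ (B *ᵥ x 0) + x 0 ⬝ᵥ (B *ᵥ x') = 0 :=
    calc _ = lam 0 * (x' ⬝ᵥ (M *ᵥ x 0) + x 0 ⬝ᵥ (M *ᵥ x')) := by
          rw [hB.dotProduct_mulVec_comm (x 0), heig0, dotProduct_smul, smul_eq_mul,
            hM.dotProduct_mulVec_comm (x 0), mul_add]
      _ = 0 := by rw [hnorm_deriv, mul_zero]
  rw [hlam_eq, hvanish, zero_add]

end HellmannFeynman

/-- Derivative of a generalized eigenvalue of the pencil `(dᵀ★₁(t)d, ★₀)` under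
perturbation `★₁(t) = ★₁ + t Eₑₑ` of a single diagonal entry: with the normalization
`x(t)ᵀ★₀x(t) = 1`, we have `λ'(0) = (yₑ)²` where `y = d x(0)`. -/
theorem stmt_8 {E V : Type*} [Fintype E] [Fintype V] [DecidableEq E] [DecidableEq V]
    (d : Matrix E V ℝ) (s0 : V → ℝ) (s1 : E → ℝ) (e : E)
    (x : ℝ → V → ℝ) (lam : ℝ → ℝ) (x' : V → ℝ) (lam' : ℝ)
    (hx : HasDerivAt x x' 0) (hlam : HasDerivAt lam lam' 0)
    (heig : ∀ᶠ t in 𝓝 (0 : ℝ),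
      (dᵀ * (Matrix.diagonal s1 + t • Matrix.single e e 1) * d) *ᵥ x t
        = lam t • (Matrix.diagonal s0 *ᵥ x t))
    (hnorm : ∀ᶠ t in 𝓝 (0 : ℝ), x t ⬝ᵥ (Matrix.diagonal s0 *ᵥ x t) = 1) :
    lam' = ((d *ᵥ x 0) e) ^ 2 := by
  have hpencil : ∀ t : ℝ, dᵀ * (diagonal s1 + t • single e e (1 : ℝ)) * d
      = dᵀ * diagonal s1 * d + t • (dᵀ * single e e (1 : ℝ) * d) := fun t => by
    rw [Matrix.mul_add, Matrix.add_mul, Matrix.mul_smul, Matrix.smul_mul]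
  simp only [hpencil] at heig
  rw [eigenvalue_deriv_eq_dotProduct_mulVec (isSymm_transpose_mul_mul d (isSymm_diagonal s1))
    (isSymm_diagonal s0) hx hlam heig hnorm, dotProduct_transpose_mul_mul_mulVec,
    dotProduct_single_one_mulVec]
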